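/- Consider the bilevel problem min_{x,y} {(x−8)² + (y−9)² | x ≥ 0, y ∈ S(x)} with S(x) = argmin_y {(y−3)² | y² ≤ x}. The point (x̄, ȳ) = (9, 3) is a strict local minimizer satisfying the second-order growth condition: there are a neighborhood U of (9,3) and c > 0 such that (x−8)² + (y−9)² ≥ (9−8)² + (3−9)² + c((x−9)² + (y−3)²) for all feasible (x, y) ∈ U. -/
import Mathlib


open Filter Topology

/-- The solution map of `min_y { (y-3)² : y² ≤ x }`. -/
def lowerLevelSol (x : ℝ) : Set ℝ :=
  {y : ℝ | y ^ 2 ≤ x ∧ ∀ z : ℝ, z ^ 2 ≤ x → (y - 3) ^ 2 ≤ (z - 3) ^ 2}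

theorem second_order_growth_bilevel_sqrt_example :
    ∃ U ∈ 𝓝 ((9, 3) : ℝ × ℝ), ∃ c > (0 : ℝ), ∀ p ∈ U, 0 ≤ p.1 → p.2 ∈ lowerLevelSol p.1 →
      ((9 : ℝ) - 8) ^ 2 + ((3 : ℝ) - 9) ^ 2 + c * ((p.1 - 9) ^ 2 + (p.2 - 3) ^ 2) ≤
        (p.1 - 8) ^ 2 + (p.2 - 9) ^ 2 := by
  refine ⟨Set.univ, Filter.univ_mem, 1, one_pos, ?_⟩
  rintro ⟨x, y⟩ - hx ⟨hyx, hmin⟩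
  simp only at *
  rcases le_or_gt 9 x with h9 | h9
  · -- x ≥ 9 : y = 3
    have h3 : (3 : ℝ) ^ 2 ≤ x := by nlinarith
    have := hmin 3 h3
    have hy3 : y = 3 := by nlinarith
    subst hy3
    nlinarith
  · -- x < 9 : y = √x, i.e. y ≥ 0 and y² = x
    have hs := Real.sq_sqrt hx
    have hsnn := Real.sqrt_nonneg x
    have hsle : Real.sqrt x ≤ 3 := by
      nlinarith [Real.sq_sqrt hx]
    have hkey := hmin (Real.sqrt x) (by rw [sq]; nlinarith)
    have hyle : y ≤ 3 := by nlinarith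
    have hyge : Real.sqrt x ≤ y := by nlinarith
    have hyx' : y ^ 2 = x := by nlinarith
    nlinarith [sq_nonneg (y - 3), sq_nonneg y]
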